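/- arXiv:1606.01096 — 8 statements merged into one kernel-verified Lean document; each statement's English description precedes it below -/
import Mathlib

section
/- Let G be a group, V a rational vector space, and κ : G → V a map satisfying κ(1) = 0, κ(g x g⁻¹) = κ(x) for all g, x ∈ G, and κ(xy) + κ(x y⁻¹) = 2κ(x) + 2κ(y) for all x, y ∈ G. Extend κ ℚ-linearly to the group algebra ℚ[G]. Then for all a, b, c ∈ G, κ((a−1)(b−1)(c−1)) = −κ((b−1)(a−1)(c−1)). -/
open MonoidAlgebra

theorem stmt_0 {G : Type*} [Group G] {V : Type*} [AddCommGroup V] [Module ℚ V]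
    (κ : MonoidAlgebra ℚ G →ₗ[ℚ] V)
    (h1 : κ (of ℚ G 1) = 0)
    (hconj : ∀ g x : G, κ (of ℚ G (g * x * g⁻¹)) = κ (of ℚ G x))
    (hrel : ∀ x y : G, κ (of ℚ G (x * y)) + κ (of ℚ G (x * y⁻¹))
        = (2 : ℚ) • κ (of ℚ G x) + (2 : ℚ) • κ (of ℚ G y)) :
    ∀ a b c : G,
      κ ((of ℚ G a - 1) * (of ℚ G b - 1) * (of ℚ G c - 1))
        = - κ ((of ℚ G b - 1) * (of ℚ G a - 1) * (of ℚ G c - 1)) := by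
  intro a b c
  set f : G → V := fun g => κ (of ℚ G g) with hf
  have hone : κ (1 : MonoidAlgebra ℚ G) = 0 := by
    rw [← map_one (of ℚ G)]; exact h1
  have expand : ∀ x y z : G,
      κ ((of ℚ G x - 1) * (of ℚ G y - 1) * (of ℚ G z - 1))
        = f (x * y * z) - f (x * y) - f (x * z) - f (y * z) + f x + f y + f z := by
    intro x y z
    have : (of ℚ G x - 1) * (of ℚ G y - 1) * (of ℚ G z - 1)
        = of ℚ G (x * y * z) - of ℚ G (x * y) - of ℚ G (x * z) - of ℚ G (y * z)
          + of ℚ G x + of ℚ G y + of ℚ G z - 1 := by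
      simp only [sub_mul, mul_sub, mul_one, one_mul, map_mul]
      abel
    rw [this]
    simp only [map_sub, map_add, hone, hf]
    abel
  have hcyc : ∀ x y : G, f (y * x) = f (x * y) := by
    intro x y
    have h := hconj y (x * y)
    have e : y * (x * y) * y⁻¹ = y * x := by group
    rw [e] at h
    exact h
  rw [expand a b c, expand b a c]
  have hba : f (b * a) = f (a * b) := hcyc a b
  have hbac : f (b * a * c) = f (a * c * b) := by
    have h := hconj b (a * c * b)
    have e : b * (a * c * b) * b⁻¹ = b * a * c := by group
    rw [e] at h
    exact h
  have e1 := hrel (a * b) c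
  have e2 := hrel (a * c) b
  have e3 := hrel a (b * c⁻¹)
  have e4 := hrel b c
  have r1 : a * b * c⁻¹ = a * (b * c⁻¹) := by group
  have r2 : a * c * b⁻¹ = a * (b * c⁻¹)⁻¹ := by group
  rw [← r1] at e3
  rw [r2] at e2
  rw [hba, hbac]
  -- Now a linear identity over ℚ in V
  linear_combination (norm := module) e1 + e2 - e3 - (2:ℚ) • e4
end

section
/- Let G be a group, V a rational vector space, and κ : G → V a map satisfying κ(1) = 0, κ(g x g⁻¹) = κ(x), and κ(xy) + κ(x y⁻¹) = 2κ(x) + 2κ(y) for all g, x, y ∈ G, extended ℚ-linearly to ℚ[G]. Then for all a, b, c, d ∈ G, κ((a−1)(b−1)(c−1)(d−1)) = 0. -/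
open MonoidAlgebra

section Aux

variable {G : Type*} [Group G] {V : Type*} [AddCommGroup V] [Module ℚ V]

/-- third difference -/
def auxC (k : G → V) (x y z : G) : V :=
  k (x*y*z) - k (x*y) - k (x*z) - k (y*z) + k x + k y + k z

/-- fourth difference -/
def auxF (k : G → V) (a b c d : G) : V :=
  auxC k (a*b) c d - auxC k a c d - auxC k b c d

variable (k : G → V) (h0 : k 1 = 0)
  (hc : ∀ x y : G, k (x*y) = k (y*x))
  (hr : ∀ x y : G, k (x*y) + k (x*y⁻¹) = (2:ℚ) • k x + (2:ℚ) • k y)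

include h0 hr in
lemma aux_even (x : G) : k x⁻¹ = k x := by
  have h := hr 1 x
  rw [one_mul, one_mul, h0] at h
  linear_combination (norm := module) h

include hc in
lemma auxC_cyc (x y z : G) : auxC k x y z = auxC k y z x := by
  unfold auxC
  have e1 : k (y*z*x) = k (x*y*z) := by rw [hc (y*z) x, ← mul_assoc]
  rw [e1, hc y x, hc z x]
  abel

include h0 hr in
lemma auxC_odd (x y z : G) : auxC k x y z⁻¹ = - auxC k x y z := by
  have e1 := hr (x*y) z
  have e2 := hr x z
  have e3 := hr y z
  have e4 := aux_even k h0 hr z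
  unfold auxC
  linear_combination (norm := module) e1 - e2 - e3 + e4

include hr in
lemma auxC_JR (x y z w : G) :
    auxC k x y (z*w) + auxC k x y (z*w⁻¹) = (2:ℚ) • auxC k x y z := by
  have e1 := hr (x*y*z) w
  have e2 := hr (x*z) w
  have e3 := hr (y*z) w
  have e4 := hr z w
  unfold auxC
  rw [show x*y*(z*w) = x*y*z*w by group, show x*y*(z*w⁻¹) = x*y*z*w⁻¹ by group,
    show x*(z*w) = x*z*w by group, show x*(z*w⁻¹) = x*z*w⁻¹ by group,
    show y*(z*w) = y*z*w by group, show y*(z*w⁻¹) = y*z*w⁻¹ by group]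
  linear_combination (norm := module) e1 - e2 - e3 + e4

include hc hr in
lemma auxC_JL (x y z w : G) :
    auxC k x y (z*w) + auxC k x y (z⁻¹*w) = (2:ℚ) • auxC k x y w := by
  have e1 := hr (w*x*y) z
  have e2 := hr (w*x) z
  have e3 := hr (w*y) z
  have e4 := hr w z
  unfold auxC
  have r1 : k (x*y*(z*w)) = k (w*x*y*z) := by
    rw [show x*y*(z*w) = (x*y*z)*w by group, hc, show w*(x*y*z) = w*x*y*z by group]
  have r2 : k (x*y*(z⁻¹*w)) = k (w*x*y*z⁻¹) := by
    rw [show x*y*(z⁻¹*w) = (x*y*z⁻¹)*w by group, hc,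
      show w*(x*y*z⁻¹) = w*x*y*z⁻¹ by group]
  have r3 : k (x*(z*w)) = k (w*x*z) := by
    rw [show x*(z*w) = (x*z)*w by group, hc, show w*(x*z) = w*x*z by group]
  have r4 : k (x*(z⁻¹*w)) = k (w*x*z⁻¹) := by
    rw [show x*(z⁻¹*w) = (x*z⁻¹)*w by group, hc, show w*(x*z⁻¹) = w*x*z⁻¹ by group]
  have r5 : k (y*(z*w)) = k (w*y*z) := by
    rw [show y*(z*w) = (y*z)*w by group, hc, show w*(y*z) = w*y*z by group]
  have r6 : k (y*(z⁻¹*w)) = k (w*y*z⁻¹) := by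
    rw [show y*(z⁻¹*w) = (y*z⁻¹)*w by group, hc, show w*(y*z⁻¹) = w*y*z⁻¹ by group]
  have r7 : k (z*w) = k (w*z) := hc z w
  have r8 : k (z⁻¹*w) = k (w*z⁻¹) := hc z⁻¹ w
  have r9 : k (w*x) = k (x*w) := hc w x
  have r10 : k (w*y) = k (y*w) := hc w y
  have r11 : k (w*x*y) = k (x*y*w) := by
    rw [show w*x*y = w*(x*y) by group, hc]
  rw [r1, r2, r3, r4, r5, r6, r7, r8]
  rw [r9] at e2
  rw [r10] at e3
  rw [r11] at e1
  linear_combination (norm := module) e1 - e2 - e3 + e4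

lemma auxF_exp (a b c d : G) : auxF k a b c d =
    k (a*b*c*d) - k (a*b*c) - k (a*b*d) - k (a*c*d) - k (b*c*d)
    + k (a*b) + k (a*c) + k (a*d) + k (b*c) + k (b*d) + k (c*d)
    - k a - k b - k c - k d := by
  unfold auxF auxC
  abel

include hc in
lemma auxF_swap (a b c d : G) : auxF k a b c d = auxF k c d a b := by
  rw [auxF_exp, auxF_exp]
  have r1 : k (c*d*a*b) = k (a*b*c*d) := by
    rw [show c*d*a*b = (c*d)*(a*b) by group, hc, show (a*b)*(c*d) = a*b*c*d by group]
  have r2 : k (c*d*a) = k (a*c*d) := by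
    rw [show c*d*a = (c*d)*a by group, hc, show a*(c*d) = a*c*d by group]
  have r3 : k (c*d*b) = k (b*c*d) := by
    rw [show c*d*b = (c*d)*b by group, hc, show b*(c*d) = b*c*d by group]
  have r4 : k (c*a*b) = k (a*b*c) := by
    rw [show c*a*b = c*(a*b) by group, hc]
  have r5 : k (d*a*b) = k (a*b*d) := by
    rw [show d*a*b = d*(a*b) by group, hc]
  rw [r1, r2, r3, r4, r5, hc c a, hc c b, hc d a, hc d b]
  abel

include hc in
lemma auxF_cyc (a b c d : G) : auxF k a b c d = auxF k b c d a := by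
  rw [auxF_exp, auxF_exp]
  have r1 : k (b*c*d*a) = k (a*b*c*d) := by
    rw [hc (b*c*d) a, show a*(b*c*d) = a*b*c*d by group]
  have r2 : k (b*c*a) = k (a*b*c) := by
    rw [hc (b*c) a, show a*(b*c) = a*b*c by group]
  have r3 : k (b*d*a) = k (a*b*d) := by
    rw [hc (b*d) a, show a*(b*d) = a*b*d by group]
  have r4 : k (c*d*a) = k (a*c*d) := by
    rw [hc (c*d) a, show a*(c*d) = a*c*d by group]
  rw [r1, r2, r3, r4, hc b a, hc c a, hc d a]
  abel

include h0 hc hr in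
lemma auxF_anti (a b c d : G) : auxF k a b c d = - auxF k b a c d := by
  have s : ∀ z : G, auxC k z c d = auxC k c d z := fun z => auxC_cyc k hc z c d
  have ii := auxC_JR k hr c d a⁻¹ b
  have iv : auxC k c d a⁻¹ = - auxC k c d a := auxC_odd k h0 hr c d a
  have v : auxC k c d (a⁻¹*b⁻¹) = - auxC k c d (b*a) := by
    rw [show a⁻¹*b⁻¹ = (b*a)⁻¹ by group]
    exact auxC_odd k h0 hr c d (b*a)
  have iii := auxC_JL k hc hr c d a b
  rw [iv, v] at ii
  unfold auxF
  rw [s (a*b), s a, s b, s (b*a)]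
  linear_combination (norm := module) iii - ii

include h0 hc hr in
lemma auxF_zero (a b c d : G) : auxF k a b c d = 0 := by
  have R2 : ∀ w x y z : G, auxF k w x y z = - auxF k w x z y := by
    intro w x y z
    calc auxF k w x y z = auxF k y z w x := by rw [← auxF_swap k hc y z w x]
      _ = - auxF k z y w x := auxF_anti k h0 hc hr y z w x
      _ = - auxF k w x z y := by rw [auxF_swap k hc z y w x]
  have h : auxF k a b c d = - auxF k a b c d := by
    calc auxF k a b c d = auxF k b c d a := auxF_cyc k hc a b c d
      _ = - auxF k c b d a := auxF_anti k h0 hc hr b c d a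
      _ = - auxF k b d a c := by rw [auxF_cyc k hc c b d a]
      _ = - - auxF k b d c a := by rw [R2 b d a c]
      _ = auxF k b d c a := neg_neg _
      _ = auxF k d c a b := auxF_cyc k hc b d c a
      _ = - auxF k c d a b := auxF_anti k h0 hc hr d c a b
      _ = - auxF k a b c d := by rw [← auxF_swap k hc a b c d]
  have h2 : (2:ℚ) • auxF k a b c d = 0 := by
    linear_combination (norm := module) h
  have h3 : auxF k a b c d = (2:ℚ)⁻¹ • ((2:ℚ) • auxF k a b c d) := by
    rw [← mul_smul]; norm_num
  rw [h3, h2, smul_zero]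

end Aux

theorem stmt_1 {G : Type*} [Group G] {V : Type*} [AddCommGroup V] [Module ℚ V]
    (κ : MonoidAlgebra ℚ G →ₗ[ℚ] V)
    (h1 : κ (of ℚ G 1) = 0)
    (hconj : ∀ g x : G, κ (of ℚ G (g * x * g⁻¹)) = κ (of ℚ G x))
    (hrel : ∀ x y : G, κ (of ℚ G (x * y)) + κ (of ℚ G (x * y⁻¹))
        = (2 : ℚ) • κ (of ℚ G x) + (2 : ℚ) • κ (of ℚ G y)) :
    ∀ a b c d : G,
      κ ((of ℚ G a - 1) * (of ℚ G b - 1) * (of ℚ G c - 1) * (of ℚ G d - 1)) = 0 := by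
  intro a b c d
  have h0 : (fun g : G => κ (of ℚ G g)) 1 = 0 := h1
  have hc : ∀ x y : G, (fun g : G => κ (of ℚ G g)) (x*y) = (fun g : G => κ (of ℚ G g)) (y*x) := by
    intro x y
    have h := hconj x (y * x)
    rw [show x * (y*x) * x⁻¹ = x*y by group] at h
    exact h
  have hF := auxF_zero (fun g : G => κ (of ℚ G g)) h0 hc hrel a b c d
  have hFe := auxF_exp (fun g : G => κ (of ℚ G g)) a b c d
  rw [hF] at hFe
  have expand : (of ℚ G a - 1) * (of ℚ G b - 1) * (of ℚ G c - 1) * (of ℚ G d - 1)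
      = of ℚ G (a*b*c*d) - of ℚ G (a*b*c) - of ℚ G (a*b*d) - of ℚ G (a*c*d) - of ℚ G (b*c*d)
        + of ℚ G (a*b) + of ℚ G (a*c) + of ℚ G (a*d) + of ℚ G (b*c) + of ℚ G (b*d) + of ℚ G (c*d)
        - of ℚ G a - of ℚ G b - of ℚ G c - of ℚ G d + of ℚ G 1 := by
    simp only [map_mul, map_one]
    noncomm_ring
  rw [expand]
  simp only [map_add, map_sub]
  rw [h1]
  linear_combination (norm := module) -hFe
end

section
/- Let G be a group, V a rational vector space, and κ : G → V a map satisfying κ(1) = 0, κ(g x g⁻¹) = κ(x), and κ(xy) + κ(x y⁻¹) = 2κ(x) + 2κ(y) for all g, x, y ∈ G, extended ℚ-linearly to ℚ[G]. Then for all a, b ∈ G, κ((a−1)(b−1)(b−1)) = 0. -/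
open MonoidAlgebra

theorem stmt_2 {G : Type*} [Group G] {V : Type*} [AddCommGroup V] [Module ℚ V]
    (κ : MonoidAlgebra ℚ G →ₗ[ℚ] V)
    (h1 : κ (of ℚ G 1) = 0)
    (hconj : ∀ g x : G, κ (of ℚ G (g * x * g⁻¹)) = κ (of ℚ G x))
    (hrel : ∀ x y : G, κ (of ℚ G (x * y)) + κ (of ℚ G (x * y⁻¹))
        = (2 : ℚ) • κ (of ℚ G x) + (2 : ℚ) • κ (of ℚ G y)) :
    ∀ a b : G,
      κ ((of ℚ G a - 1) * (of ℚ G b - 1) * (of ℚ G b - 1)) = 0 := by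
  intro a b
  have h2 : ∀ z : MonoidAlgebra ℚ G, κ (2 * z) = κ z + κ z := by
    intro z; rw [two_mul, map_add]
  have hone : κ (1 : MonoidAlgebra ℚ G) = 0 := by
    rw [← (of ℚ G).map_one]; exact h1
  have key : (of ℚ G a - 1) * (of ℚ G b - 1) * (of ℚ G b - 1)
      = of ℚ G (a * (b * b)) - 2 * (of ℚ G (a * b)) + of ℚ G a
        - of ℚ G (b * b) + 2 * (of ℚ G b) - 1 := by
    simp only [map_mul]
    noncomm_ring
  have hb' : κ (of ℚ G (b * b)) = (2 : ℚ) • κ (of ℚ G b) + (2 : ℚ) • κ (of ℚ G b) := by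
    have h := hrel b b
    rw [mul_inv_cancel, h1, add_zero] at h
    exact h
  have hab' : κ (of ℚ G (a * (b * b)))
      = (2 : ℚ) • κ (of ℚ G (a * b)) + (2 : ℚ) • κ (of ℚ G b) - κ (of ℚ G a) := by
    have h := hrel (a * b) b
    have h' : of ℚ G (a * b * b) = of ℚ G (a * (b * b)) := by rw [mul_assoc]
    rw [h', mul_inv_cancel_right] at h
    exact eq_sub_of_add_eq h
  rw [key]
  simp only [map_sub, map_add, h2, hone, hb', hab', two_smul]
  abel
end

section
/- Let G be a group, V a rational vector space, and κ : G → V a map satisfying κ(1) = 0, κ(g x g⁻¹) = κ(x), and κ(xy) + κ(x y⁻¹) = 2κ(x) + 2κ(y) for all g, x, y ∈ G, extended ℚ-linearly to ℚ[G]. Then for all a, b, c ∈ G, κ([a,b]c − c) = 2 κ((a−1)(b−1)(c−1)), where [a,b] = a b a⁻¹ b⁻¹ is the group commutator. -/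
open MonoidAlgebra

theorem stmt_3 {G : Type*} [Group G] {V : Type*} [AddCommGroup V] [Module ℚ V]
    (κ : MonoidAlgebra ℚ G →ₗ[ℚ] V)
    (h1 : κ (of ℚ G 1) = 0)
    (hconj : ∀ g x : G, κ (of ℚ G (g * x * g⁻¹)) = κ (of ℚ G x))
    (hrel : ∀ x y : G, κ (of ℚ G (x * y)) + κ (of ℚ G (x * y⁻¹))
        = (2 : ℚ) • κ (of ℚ G x) + (2 : ℚ) • κ (of ℚ G y)) :
    ∀ a b c : G,
      κ (of ℚ G (a * b * a⁻¹ * b⁻¹ * c) - of ℚ G c)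
        = (2 : ℚ) • κ ((of ℚ G a - 1) * (of ℚ G b - 1) * (of ℚ G c - 1)) := by
  intro a b c
  have key : ∀ (x y g : G), g * x * g⁻¹ = y → κ (of ℚ G y) = κ (of ℚ G x) := by
    intro x y g h; rw [← h, hconj]
  have s1 : κ (of ℚ G (a*b*a⁻¹*(c⁻¹*b))) + κ (of ℚ G (a*b*a⁻¹*b⁻¹*c))
      = (2:ℚ) • κ (of ℚ G (a*b*a⁻¹)) + (2:ℚ) • κ (of ℚ G (c⁻¹*b)) := by
    have h := hrel (a*b*a⁻¹) (c⁻¹*b)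
    rw [show a*b*a⁻¹*(c⁻¹*b)⁻¹ = a*b*a⁻¹*b⁻¹*c by group] at h
    exact h
  have c1 : κ (of ℚ G (a*b*a⁻¹)) = κ (of ℚ G b) := hconj a b
  have c2 : κ (of ℚ G (c⁻¹*b)) = κ (of ℚ G (b*c⁻¹)) := key _ _ b⁻¹ (by group)
  have s2 : κ (of ℚ G (a*b*a⁻¹*(c⁻¹*b))) = κ (of ℚ G (b*a*b*a⁻¹*c⁻¹)) :=
    key _ _ b⁻¹ (by group)
  have s3 : κ (of ℚ G (b*a*b*c*a)) + κ (of ℚ G (b*a*b*a⁻¹*c⁻¹))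
      = (2:ℚ) • κ (of ℚ G (b*a*b)) + (2:ℚ) • κ (of ℚ G (c*a)) := by
    have h := hrel (b*a*b) (c*a)
    rw [show b*a*b*(c*a) = b*a*b*c*a by group,
      show b*a*b*(c*a)⁻¹ = b*a*b*a⁻¹*c⁻¹ by group] at h
    exact h
  have s4 : κ (of ℚ G (b*a*b)) = κ (of ℚ G (a*b*b)) := key _ _ b (by group)
  have s5 : κ (of ℚ G (a*b*b)) + κ (of ℚ G a)
      = (2:ℚ) • κ (of ℚ G (a*b)) + (2:ℚ) • κ (of ℚ G b) := by
    have h := hrel (a*b) b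
    rw [show a*b*b⁻¹ = a by group] at h
    exact h
  have s6 : κ (of ℚ G (b*a*b*c*a)) = κ (of ℚ G (a*b*a*b*c)) := key _ _ a⁻¹ (by group)
  have s7 : κ (of ℚ G (a*b*a*b*c)) + κ (of ℚ G c⁻¹)
      = (2:ℚ) • κ (of ℚ G (a*b)) + (2:ℚ) • κ (of ℚ G (a*b*c)) := by
    have h := hrel (a*b) (a*b*c)
    rw [show a*b*(a*b*c) = a*b*a*b*c by group] at h
    rw [key c⁻¹ (a*b*(a*b*c)⁻¹) (a*b) (by group)] at h
    exact h
  have hinvc : κ (of ℚ G c⁻¹) = κ (of ℚ G c) := by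
    have h := hrel 1 c
    rw [one_mul, one_mul, h1] at h
    linear_combination (norm := module) h
  have s9 := hrel b c
  have s10 : κ (of ℚ G (c*a)) = κ (of ℚ G (a*c)) := key _ _ a⁻¹ (by group)
  rw [show (of ℚ G a - 1) * (of ℚ G b - 1) * (of ℚ G c - 1)
      = of ℚ G (a*b*c) - of ℚ G (a*b) - of ℚ G (a*c) - of ℚ G (b*c)
        + of ℚ G a + of ℚ G b + of ℚ G c - of ℚ G 1 by
    simp only [sub_mul, mul_sub, one_mul, mul_one, ← map_mul, map_one]; abel]
  simp only [map_sub, map_add]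
  linear_combination (norm := module) s1 - s2 + (2:ℚ) • c1 + (2:ℚ) • c2 - s3 + s6 + s7
    - hinvc - (2:ℚ) • s4 - (2:ℚ) • s5 - (2:ℚ) • s10 + (2:ℚ) • s9 + (2:ℚ) • h1
end

section
/- Let G be a group, V a rational vector space, and κ : G → V a map satisfying κ(1) = 0, κ(g x g⁻¹) = κ(x), and κ(xy) + κ(x y⁻¹) = 2κ(x) + 2κ(y) for all g, x, y ∈ G, extended ℚ-linearly to ℚ[G]. Then for all a, b, c ∈ G, κ(abc) = κ(−bac + 2ab + 2bc + 2ca − 2a − 2b − 2c). -/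
open MonoidAlgebra

theorem stmt_5 {G : Type*} [Group G] {V : Type*} [AddCommGroup V] [Module ℚ V]
    (κ : MonoidAlgebra ℚ G →ₗ[ℚ] V)
    (h1 : κ (of ℚ G 1) = 0)
    (hconj : ∀ g x : G, κ (of ℚ G (g * x * g⁻¹)) = κ (of ℚ G x))
    (hrel : ∀ x y : G, κ (of ℚ G (x * y)) + κ (of ℚ G (x * y⁻¹))
        = (2 : ℚ) • κ (of ℚ G x) + (2 : ℚ) • κ (of ℚ G y)) :
    ∀ a b c : G,
      κ (of ℚ G (a * b * c))
        = κ (- of ℚ G (b * a * c) + 2 * of ℚ G (a * b) + 2 * of ℚ G (b * c)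
            + 2 * of ℚ G (c * a) - 2 * of ℚ G a - 2 * of ℚ G b - 2 * of ℚ G c) := by
  have hcyc : ∀ x y : G, κ (of ℚ G (x * y)) = κ (of ℚ G (y * x)) := by
    intro x y
    have := hconj x (y * x)
    simpa [mul_assoc] using this
  have hinv : ∀ x : G, κ (of ℚ G x⁻¹) = κ (of ℚ G x) := by
    intro x
    have h := hrel 1 x
    simp only [one_mul, h1, smul_zero, zero_add, two_smul] at h
    exact add_left_cancel h
  intro a b c
  have e1 := hrel (a * b) c
  have e2 := hrel (a * c) b
  have e3 := hrel (b * c⁻¹) a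
  have e4 := hrel b c
  -- identifications
  have i1 : κ (of ℚ G (b * c⁻¹ * a)) = κ (of ℚ G (a * b * c⁻¹)) := by
    rw [hcyc, ← mul_assoc]
  have i2 : κ (of ℚ G (b * c⁻¹ * a⁻¹)) = κ (of ℚ G (a * c * b⁻¹)) := by
    rw [← hinv (b * c⁻¹ * a⁻¹)]; congr 1; group
  have i3 : κ (of ℚ G (a * c * b)) = κ (of ℚ G (b * a * c)) := by
    rw [hcyc, ← mul_assoc]
  have i4 : κ (of ℚ G (a * c)) = κ (of ℚ G (c * a)) := hcyc a c
  rw [i1, i2] at e3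
  rw [i3, i4] at e2
  have expand : κ (- of ℚ G (b * a * c) + 2 * of ℚ G (a * b) + 2 * of ℚ G (b * c)
      + 2 * of ℚ G (c * a) - 2 * of ℚ G a - 2 * of ℚ G b - 2 * of ℚ G c)
      = - κ (of ℚ G (b * a * c)) + (2:ℚ) • κ (of ℚ G (a * b)) + (2:ℚ) • κ (of ℚ G (b * c))
      + (2:ℚ) • κ (of ℚ G (c * a)) - (2:ℚ) • κ (of ℚ G a) - (2:ℚ) • κ (of ℚ G b)
      - (2:ℚ) • κ (of ℚ G c) := by
    simp only [two_mul, two_smul, map_add, map_sub, map_neg]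
  rw [expand]
  linear_combination (norm := module) e1 - e3 + e2 - (2:ℚ) • e4
end

section
/- Let G be a group, V a rational vector space, and κ : G → V a map satisfying κ(1) = 0, κ(g x g⁻¹) = κ(x), and κ(xy) + κ(x y⁻¹) = 2κ(x) + 2κ(y) for all g, x, y ∈ G, extended ℚ-linearly to ℚ[G]. Then for all a, a', b, c ∈ G, κ((aa'−1)(b−1)(c−1)) = κ((a−1)(b−1)(c−1)) + κ((a'−1)(b−1)(c−1)). Consequently the map (a,b,c) ↦ κ((a−1)(b−1)(c−1)) is additive in each argument and alternating, so it factors through the third exterior power of the abelianization G^{ab} ⊗ ℚ. -/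
set_option linter.unusedSectionVars false

section Aux
variable {G : Type*} [Group G] {V : Type*} [AddCommGroup V] [Module ℚ V]

def Taux (K : G → V) (a b c : G) : V :=
  K (a*b*c) - K (a*b) - K (a*c) - K (b*c) + K a + K b + K c

def Faux (K : G → V) (a b c d : G) : V :=
  Taux K (a*b) c d - Taux K a c d - Taux K b c d

variable {K : G → V}

theorem kinv (h1 : K 1 = 0)
    (hrel : ∀ x y : G, K (x*y) + K (x*y⁻¹) = (2:ℚ) • K x + (2:ℚ) • K y)
    (x : G) : K x⁻¹ = K x := by
  have h := hrel 1 x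
  simp only [one_mul] at h
  linear_combination (norm := module) h + (2:ℚ) • h1

theorem kcomm (hconj : ∀ g x : G, K (g*x*g⁻¹) = K x)
    (x y : G) : K (x*y) = K (y*x) := by
  have h := hconj x (y*x)
  rw [show x*(y*x)*x⁻¹ = x*y by group] at h
  exact h

theorem kleft (h1 : K 1 = 0) (hconj : ∀ g x : G, K (g*x*g⁻¹) = K x)
    (hrel : ∀ x y : G, K (x*y) + K (x*y⁻¹) = (2:ℚ) • K x + (2:ℚ) • K y)
    (y z : G) : K (y*z) + K (y⁻¹*z) = (2:ℚ) • K y + (2:ℚ) • K z := by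
  have h2 : K (y⁻¹*z) = K (y*z⁻¹) := by
    rw [← kinv h1 hrel (y⁻¹*z), show (y⁻¹*z)⁻¹ = z⁻¹*y by group, kcomm hconj]
  rw [h2]; exact hrel y z

theorem kmid (hconj : ∀ g x : G, K (g*x*g⁻¹) = K x)
    (hrel : ∀ x y : G, K (x*y) + K (x*y⁻¹) = (2:ℚ) • K x + (2:ℚ) • K y)
    (x y z : G) : K (x*y*z) + K (x*y⁻¹*z) = (2:ℚ) • K (x*z) + (2:ℚ) • K y := by
  have h := hrel (x*z) (z⁻¹*y*z)
  rw [show (x*z)*(z⁻¹*y*z) = x*y*z by group,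
      show (x*z)*(z⁻¹*y*z)⁻¹ = x*y⁻¹*z by group] at h
  have hc : K (z⁻¹*y*z) = K y := by
    have := hconj z⁻¹ y
    rwa [show z⁻¹*y*(z⁻¹)⁻¹ = z⁻¹*y*z by group] at this
  rw [hc] at h
  exact h

theorem T1 (h1 : K 1 = 0) (b c : G) : Taux K 1 b c = 0 := by
  unfold Taux
  simp only [one_mul, h1]
  abel

theorem Talt (h1 : K 1 = 0)
    (hrel : ∀ x y : G, K (x*y) + K (x*y⁻¹) = (2:ℚ) • K x + (2:ℚ) • K y)
    (a b : G) : Taux K a b b = 0 := by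
  unfold Taux
  have h2 : K (a*b*b) + K a = (2:ℚ) • K (a*b) + (2:ℚ) • K b := by
    have := hrel (a*b) b
    rwa [show (a*b)*b⁻¹ = a by group] at this
  have h3 : K (b*b) + K 1 = (2:ℚ) • K b + (2:ℚ) • K b := by
    have := hrel b b
    rwa [show b*b⁻¹ = (1:G) by group] at this
  linear_combination (norm := module) h2 - h3 + h1

theorem Tcyc (h1 : K 1 = 0) (hconj : ∀ g x : G, K (g*x*g⁻¹) = K x)
    (a b c : G) : Taux K a b c = Taux K b c a := by
  unfold Taux
  have e1 : K (a*b*c) = K (b*c*a) := by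
    rw [mul_assoc]; exact kcomm hconj a (b*c)
  linear_combination (norm := module) e1 - kcomm hconj a b - kcomm hconj a c

theorem Tinv3 (h1 : K 1 = 0) (hconj : ∀ g x : G, K (g*x*g⁻¹) = K x)
    (hrel : ∀ x y : G, K (x*y) + K (x*y⁻¹) = (2:ℚ) • K x + (2:ℚ) • K y)
    (a b c : G) : Taux K a b c⁻¹ = - Taux K a b c := by
  unfold Taux
  have h₁ := hrel (a*b) c
  have h₂ := hrel a c
  have h₃ := hrel b c
  have h₄ := kinv h1 hrel c
  linear_combination (norm := module) h₁ - h₂ - h₃ + h₄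

theorem Tinv1 (h1 : K 1 = 0) (hconj : ∀ g x : G, K (g*x*g⁻¹) = K x)
    (hrel : ∀ x y : G, K (x*y) + K (x*y⁻¹) = (2:ℚ) • K x + (2:ℚ) • K y)
    (a b c : G) : Taux K a⁻¹ b c = - Taux K a b c := by
  rw [Tcyc h1 hconj a⁻¹ b c, Tinv3 h1 hconj hrel b c a, Tcyc h1 hconj b c a,
    Tcyc h1 hconj c a b]

theorem Tinv2 (h1 : K 1 = 0) (hconj : ∀ g x : G, K (g*x*g⁻¹) = K x)
    (hrel : ∀ x y : G, K (x*y) + K (x*y⁻¹) = (2:ℚ) • K x + (2:ℚ) • K y)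
    (a b c : G) : Taux K a b⁻¹ c = - Taux K a b c := by
  rw [Tcyc h1 hconj a b⁻¹ c, Tinv1 h1 hconj hrel b c a, Tcyc h1 hconj b c a,
    Tcyc h1 hconj c a b]

theorem Tswap (h1 : K 1 = 0) (hconj : ∀ g x : G, K (g*x*g⁻¹) = K x)
    (hrel : ∀ x y : G, K (x*y) + K (x*y⁻¹) = (2:ℚ) • K x + (2:ℚ) • K y)
    (a b c : G) : Taux K b a c = - Taux K a b c := by
  have rev : Taux K a⁻¹ b⁻¹ c⁻¹ = Taux K b a c := by
    unfold Taux
    have e1 : K (a⁻¹*b⁻¹*c⁻¹) = K (b*a*c) := by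
      rw [show a⁻¹*b⁻¹*c⁻¹ = (c*b*a)⁻¹ by group, kinv h1 hrel, mul_assoc,
        kcomm hconj c (b*a)]
    have e2 : K (a⁻¹*b⁻¹) = K (b*a) := by
      rw [show a⁻¹*b⁻¹ = (b*a)⁻¹ by group, kinv h1 hrel]
    have e3 : K (a⁻¹*c⁻¹) = K (a*c) := by
      rw [show a⁻¹*c⁻¹ = (c*a)⁻¹ by group, kinv h1 hrel, kcomm hconj]
    have e4 : K (b⁻¹*c⁻¹) = K (b*c) := by
      rw [show b⁻¹*c⁻¹ = (c*b)⁻¹ by group, kinv h1 hrel, kcomm hconj]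
    have i1 := kinv h1 hrel a
    have i2 := kinv h1 hrel b
    have i3 := kinv h1 hrel c
    linear_combination (norm := module) e1 - e2 - e3 - e4 + i1 + i2 + i3
  rw [← rev, Tinv1 h1 hconj hrel, Tinv2 h1 hconj hrel, Tinv3 h1 hconj hrel]
  abel

end Aux

section Aux2
set_option linter.unusedSectionVars false
variable {G : Type*} [Group G] {V : Type*} [AddCommGroup V] [Module ℚ V]
variable {K : G → V}

theorem Fexp (K : G → V) (a b c d : G) :
    Faux K a b c d = K (a*b*c*d) - K (a*b*c) - K (a*b*d) - K (a*c*d) - K (b*c*d)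
      + K (a*b) + K (a*c) + K (a*d) + K (b*c) + K (b*d) + K (c*d)
      - K a - K b - K c - K d := by
  unfold Faux Taux
  abel

theorem Fcyc (h1 : K 1 = 0) (hconj : ∀ g x : G, K (g*x*g⁻¹) = K x)
    (hrel : ∀ x y : G, K (x*y) + K (x*y⁻¹) = (2:ℚ) • K x + (2:ℚ) • K y)
    (a b c d : G) : Faux K a b c d = Faux K b c d a := by
  rw [Fexp, Fexp]
  have q1 : K (a*b*c*d) = K (b*c*d*a) := by
    rw [show a*b*c*d = a*(b*c*d) by group, kcomm hconj a (b*c*d)]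
  have q2 : K (a*b*c) = K (b*c*a) := by rw [mul_assoc, kcomm hconj]
  have q3 : K (a*b*d) = K (b*d*a) := by rw [mul_assoc, kcomm hconj]
  have q4 : K (a*c*d) = K (c*d*a) := by rw [mul_assoc, kcomm hconj]
  linear_combination (norm := module) q1 - q2 - q3 - q4 + kcomm hconj a b
    + kcomm hconj a c + kcomm hconj a d

theorem Finv2 (h1 : K 1 = 0) (hconj : ∀ g x : G, K (g*x*g⁻¹) = K x)
    (hrel : ∀ x y : G, K (x*y) + K (x*y⁻¹) = (2:ℚ) • K x + (2:ℚ) • K y)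
    (a b c d : G) : Faux K a b⁻¹ c d = - Faux K a b c d := by
  have A1 := kmid hconj hrel a b (c*d)
  rw [show a*b*(c*d) = a*b*c*d by group, show a*b⁻¹*(c*d) = a*b⁻¹*c*d by group,
      show a*(c*d) = a*c*d by group] at A1
  have A2 := kmid hconj hrel a b c
  have A3 := kmid hconj hrel a b d
  have A4 := hrel a b
  have A5 := kleft h1 hconj hrel b (c*d)
  rw [show b*(c*d) = b*c*d by group, show b⁻¹*(c*d) = b⁻¹*c*d by group] at A5
  have A6 := kleft h1 hconj hrel b c
  have A7 := kleft h1 hconj hrel b d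
  have A8 := kinv h1 hrel b
  have FE1 := Fexp K a b⁻¹ c d
  have FE2 := Fexp K a b c d
  linear_combination (norm := module) FE1 + FE2 + A1 - A2 - A3 + A4 - A5 + A6 + A7 - A8

theorem Finv1 (h1 : K 1 = 0) (hconj : ∀ g x : G, K (g*x*g⁻¹) = K x)
    (hrel : ∀ x y : G, K (x*y) + K (x*y⁻¹) = (2:ℚ) • K x + (2:ℚ) • K y)
    (a b c d : G) : Faux K a⁻¹ b c d = - Faux K a b c d := by
  calc Faux K a⁻¹ b c d = Faux K b c d a⁻¹ := Fcyc h1 hconj hrel _ _ _ _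
    _ = Faux K c d a⁻¹ b := Fcyc h1 hconj hrel _ _ _ _
    _ = Faux K d a⁻¹ b c := Fcyc h1 hconj hrel _ _ _ _
    _ = - Faux K d a b c := Finv2 h1 hconj hrel _ _ _ _
    _ = - Faux K a b c d := by rw [Fcyc h1 hconj hrel d a b c]

theorem Fxx (h1 : K 1 = 0) (hconj : ∀ g x : G, K (g*x*g⁻¹) = K x)
    (hrel : ∀ x y : G, K (x*y) + K (x*y⁻¹) = (2:ℚ) • K x + (2:ℚ) • K y)
    (x c d : G) : Faux K x x⁻¹ c d = 0 := by
  unfold Faux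
  rw [show x*x⁻¹ = (1:G) by group, T1 h1, Tinv1 h1 hconj hrel]
  abel

theorem F1 (h1 : K 1 = 0) (y c d : G) : Faux K 1 y c d = 0 := by
  unfold Faux
  rw [one_mul, T1 h1]
  abel

theorem cocycleF (K : G → V) (a b e c d : G) :
    Faux K (a*b) e c d + Faux K a b c d = Faux K a (b*e) c d + Faux K b e c d := by
  unfold Faux
  rw [← mul_assoc a b e]
  abel

theorem lemA (h1 : K 1 = 0) (hconj : ∀ g x : G, K (g*x*g⁻¹) = K x)
    (hrel : ∀ x y : G, K (x*y) + K (x*y⁻¹) = (2:ℚ) • K x + (2:ℚ) • K y)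
    (x y c d : G) : Faux K x⁻¹ (x*y) c d = - Faux K x y c d := by
  have h := cocycleF K x⁻¹ x y c d
  rw [inv_mul_cancel] at h
  have z1 : Faux K x⁻¹ x c d = 0 := by
    have := Fxx h1 hconj hrel x⁻¹ c d
    rwa [inv_inv] at this
  rw [F1 h1, z1] at h
  linear_combination (norm := module) - h

theorem Fswap12 (h1 : K 1 = 0) (hconj : ∀ g x : G, K (g*x*g⁻¹) = K x)
    (hrel : ∀ x y : G, K (x*y) + K (x*y⁻¹) = (2:ℚ) • K x + (2:ℚ) • K y)
    (a b c d : G) : Faux K b a c d = - Faux K a b c d := by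
  have h := cocycleF K a b (b⁻¹*a⁻¹) c d
  rw [show b*(b⁻¹*a⁻¹) = a⁻¹ by group] at h
  have z1 : Faux K (a*b) (b⁻¹*a⁻¹) c d = 0 := by
    have := Fxx h1 hconj hrel (a*b) c d
    rwa [mul_inv_rev] at this
  have z2 : Faux K a a⁻¹ c d = 0 := Fxx h1 hconj hrel a c d
  have z3 : Faux K b (b⁻¹*a⁻¹) c d = - Faux K b a c d := by
    have hA := lemA h1 hconj hrel b⁻¹ a⁻¹ c d
    rw [inv_inv] at hA
    rw [hA, Finv1 h1 hconj hrel, Finv2 h1 hconj hrel]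
    abel
  rw [z1, z2, z3] at h
  linear_combination (norm := module) h

theorem Fswap23 (h1 : K 1 = 0) (hconj : ∀ g x : G, K (g*x*g⁻¹) = K x)
    (hrel : ∀ x y : G, K (x*y) + K (x*y⁻¹) = (2:ℚ) • K x + (2:ℚ) • K y)
    (a b c d : G) : Faux K a c b d = - Faux K a b c d := by
  calc Faux K a c b d = Faux K c b d a := Fcyc h1 hconj hrel _ _ _ _
    _ = - Faux K b c d a := Fswap12 h1 hconj hrel _ _ _ _
    _ = - Faux K a b c d := by rw [← Fcyc h1 hconj hrel a b c d]

theorem Fswap34 (h1 : K 1 = 0) (hconj : ∀ g x : G, K (g*x*g⁻¹) = K x)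
    (hrel : ∀ x y : G, K (x*y) + K (x*y⁻¹) = (2:ℚ) • K x + (2:ℚ) • K y)
    (a b c d : G) : Faux K a b d c = - Faux K a b c d := by
  calc Faux K a b d c = Faux K b d c a := Fcyc h1 hconj hrel _ _ _ _
    _ = - Faux K b c d a := Fswap23 h1 hconj hrel _ _ _ _
    _ = - Faux K a b c d := by rw [← Fcyc h1 hconj hrel a b c d]

theorem Fzero (h1 : K 1 = 0) (hconj : ∀ g x : G, K (g*x*g⁻¹) = K x)
    (hrel : ∀ x y : G, K (x*y) + K (x*y⁻¹) = (2:ℚ) • K x + (2:ℚ) • K y)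
    (a b c d : G) : Faux K a b c d = 0 := by
  have h : Faux K a b c d = - Faux K a b c d := by
    calc Faux K a b c d = Faux K b c d a := Fcyc h1 hconj hrel _ _ _ _
      _ = - Faux K b c a d := Fswap34 h1 hconj hrel b c a d
      _ = Faux K b a c d := by rw [Fswap23 h1 hconj hrel b a c d]; abel
      _ = - Faux K a b c d := Fswap12 h1 hconj hrel _ _ _ _
  have h2 : (2:ℚ) • Faux K a b c d = 0 := by
    linear_combination (norm := module) h
  exact (smul_eq_zero.mp h2).resolve_left (by norm_num)

end Aux2

open MonoidAlgebra

theorem stmt_6 {G : Type*} [Group G] {V : Type*} [AddCommGroup V] [Module ℚ V]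
    (κ : MonoidAlgebra ℚ G →ₗ[ℚ] V)
    (h1 : κ (of ℚ G 1) = 0)
    (hconj : ∀ g x : G, κ (of ℚ G (g * x * g⁻¹)) = κ (of ℚ G x))
    (hrel : ∀ x y : G, κ (of ℚ G (x * y)) + κ (of ℚ G (x * y⁻¹))
        = (2 : ℚ) • κ (of ℚ G x) + (2 : ℚ) • κ (of ℚ G y)) :
    (∀ a a' b c : G,
      κ ((of ℚ G (a * a') - 1) * (of ℚ G b - 1) * (of ℚ G c - 1))
        = κ ((of ℚ G a - 1) * (of ℚ G b - 1) * (of ℚ G c - 1))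
          + κ ((of ℚ G a' - 1) * (of ℚ G b - 1) * (of ℚ G c - 1)))
    ∧ (∀ a b b' c : G,
      κ ((of ℚ G a - 1) * (of ℚ G (b * b') - 1) * (of ℚ G c - 1))
        = κ ((of ℚ G a - 1) * (of ℚ G b - 1) * (of ℚ G c - 1))
          + κ ((of ℚ G a - 1) * (of ℚ G b' - 1) * (of ℚ G c - 1)))
    ∧ (∀ a b c c' : G,
      κ ((of ℚ G a - 1) * (of ℚ G b - 1) * (of ℚ G (c * c') - 1))
        = κ ((of ℚ G a - 1) * (of ℚ G b - 1) * (of ℚ G c - 1))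
          + κ ((of ℚ G a - 1) * (of ℚ G b - 1) * (of ℚ G c' - 1)))
    ∧ (∀ a b c : G,
      κ ((of ℚ G a - 1) * (of ℚ G b - 1) * (of ℚ G c - 1))
        = - κ ((of ℚ G b - 1) * (of ℚ G a - 1) * (of ℚ G c - 1)))
    ∧ (∀ a b : G,
      κ ((of ℚ G a - 1) * (of ℚ G b - 1) * (of ℚ G b - 1)) = 0) := by
  have bridge3 : ∀ a b c : G,
      κ ((of ℚ G a - 1) * (of ℚ G b - 1) * (of ℚ G c - 1))
        = Taux (fun g => κ (of ℚ G g)) a b c := by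
    intro a b c
    have e : (of ℚ G a - 1) * (of ℚ G b - 1) * (of ℚ G c - 1)
        = of ℚ G (a*b*c) - of ℚ G (a*b) - of ℚ G (a*c) - of ℚ G (b*c)
          + of ℚ G a + of ℚ G b + of ℚ G c - of ℚ G 1 := by
      simp only [map_mul]; noncomm_ring
    rw [e]
    simp only [map_sub, map_add, Taux]
    rw [h1]
    abel
  have bridge4 : ∀ a b c d : G,
      κ ((of ℚ G a - 1) * (of ℚ G b - 1) * (of ℚ G c - 1) * (of ℚ G d - 1))
        = Faux (fun g => κ (of ℚ G g)) a b c d := by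
    intro a b c d
    have e : (of ℚ G a - 1) * (of ℚ G b - 1) * (of ℚ G c - 1) * (of ℚ G d - 1)
        = (of ℚ G (a*b) - 1) * (of ℚ G c - 1) * (of ℚ G d - 1)
          - (of ℚ G a - 1) * (of ℚ G c - 1) * (of ℚ G d - 1)
          - (of ℚ G b - 1) * (of ℚ G c - 1) * (of ℚ G d - 1) := by
      simp only [map_mul]; noncomm_ring
    rw [e, map_sub, map_sub, bridge3, bridge3, bridge3]
    rfl
  refine ⟨?_, ?_, ?_, ?_, ?_⟩
  · intro a a' b c
    have e : (of ℚ G (a * a') - 1) * (of ℚ G b - 1) * (of ℚ G c - 1)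
        = (of ℚ G a - 1) * (of ℚ G a' - 1) * (of ℚ G b - 1) * (of ℚ G c - 1)
          + (of ℚ G a - 1) * (of ℚ G b - 1) * (of ℚ G c - 1)
          + (of ℚ G a' - 1) * (of ℚ G b - 1) * (of ℚ G c - 1) := by
      simp only [map_mul]; noncomm_ring
    rw [e, map_add, map_add, bridge4, Fzero h1 hconj hrel, zero_add]
  · intro a b b' c
    have e : (of ℚ G a - 1) * (of ℚ G (b * b') - 1) * (of ℚ G c - 1)
        = (of ℚ G a - 1) * (of ℚ G b - 1) * (of ℚ G b' - 1) * (of ℚ G c - 1)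
          + (of ℚ G a - 1) * (of ℚ G b - 1) * (of ℚ G c - 1)
          + (of ℚ G a - 1) * (of ℚ G b' - 1) * (of ℚ G c - 1) := by
      simp only [map_mul]; noncomm_ring
    rw [e, map_add, map_add, bridge4, Fzero h1 hconj hrel, zero_add]
  · intro a b c c'
    have e : (of ℚ G a - 1) * (of ℚ G b - 1) * (of ℚ G (c * c') - 1)
        = (of ℚ G a - 1) * (of ℚ G b - 1) * (of ℚ G c - 1) * (of ℚ G c' - 1)
          + (of ℚ G a - 1) * (of ℚ G b - 1) * (of ℚ G c - 1)
          + (of ℚ G a - 1) * (of ℚ G b - 1) * (of ℚ G c' - 1) := by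
      simp only [map_mul]; noncomm_ring
    rw [e, map_add, map_add, bridge4, Fzero h1 hconj hrel, zero_add]
  · intro a b c
    rw [bridge3, bridge3, Tswap h1 hconj hrel a b c, neg_neg]
  · intro a b
    rw [bridge3]
    exact Talt h1 hrel a b
end

section
/- Let F be a free group on generators x₁, …, x_M, let ε : ℚ[F] → ℚ be the augmentation map, and let I = ker ε. Then for every n ≥ 0 the quotient Iⁿ/I^{n+1} is isomorphic as a ℚ-vector space to the n-th tensor power H^{⊗n} of H = ℚ^M, via the map sending the class of (x_{i₁}−1)(x_{i₂}−1)⋯(x_{iₙ}−1) to e_{i₁} ⊗ ⋯ ⊗ e_{iₙ}. -/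
/-!
The map `e_{i₁} ⊗ ⋯ ⊗ e_{iₙ} ↦ (x_{i₁} - 1)⋯(x_{iₙ} - 1)` induces `H^{⊗n} → Iⁿ/Iⁿ⁺¹`.
It is onto because `I` is spanned by the elements `g - 1`, and `g - 1 ≡ Σ aᵢ (xᵢ - 1) mod I²`
where `a` is the image of `g` in `H`. It is injective because the Magnus representation
`xᵢ ↦ 1 + Xᵢ` on the tensor algebra of `H` truncated above degree `n` sends `I` to operators
raising the degree, hence kills `Iⁿ⁺¹`, and its degree-`n` coefficient is a left inverse.
-/

open MonoidAlgebra
open scoped TensorProduct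

section GradedPiece

variable {k A H : Type*} [CommRing k] [Ring A] [Algebra k A] [AddCommGroup H] [Module k H]

lemma Submodule.list_prod_ofFn_mem_pow (I : Submodule k A) {m : ℕ} {a : Fin m → A}
    (ha : ∀ s, a s ∈ I) : (List.ofFn a).prod ∈ I ^ m :=
  I.pow_subset_pow (Set.mem_pow.2 ⟨fun s => ⟨a s, ha s⟩, rfl⟩)

lemma Submodule.list_prod_ofFn_sub_mem_pow (I : Submodule k A) :
    ∀ {m : ℕ} {a b : Fin m → A}, (∀ s, a s ∈ I) → (∀ s, b s ∈ I) →
      (∀ s, a s - b s ∈ I ^ 2) → (List.ofFn a).prod - (List.ofFn b).prod ∈ I ^ (m + 1)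
  | 0, _, _, _, _, _ => by simp
  | m + 1, a, b, ha, hb, hab => by
    have htail := I.list_prod_ofFn_sub_mem_pow (fun s => ha s.succ) (fun s => hb s.succ)
      (fun s => hab s.succ)
    have hb' := I.list_prod_ofFn_mem_pow fun s => hb s.succ
    simp only [List.ofFn_succ, List.prod_cons]
    rw [show ∀ x y z w : A, x * y - z * w = x * (y - w) + (x - z) * w by intros; noncomm_ring]
    refine add_mem ?_ ?_
    · rw [pow_succ' I (m + 1)]
      exact Submodule.mul_mem_mul (ha 0) htail
    · rw [show m + 1 + 1 = 2 + m by omega, pow_add]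
      exact Submodule.mul_mem_mul (hab 0) hb'

variable (L : H →ₗ[k] A) (n : ℕ)

noncomputable def tensorPowerMul : ⨂[k]^n H →ₗ[k] A :=
  PiTensorProduct.lift ((MultilinearMap.mkPiAlgebraFin k n A).compLinearMap fun _ => L)

@[simp]
lemma tensorPowerMul_tprod (v : Fin n → H) :
    tensorPowerMul L n (PiTensorProduct.tprod k v) = (List.ofFn fun s => L (v s)).prod := by
  simp [tensorPowerMul]

variable {L}

lemma tensorPowerMul_mem_pow {I : Submodule k A} (hL : ∀ h, L h ∈ I) (z : ⨂[k]^n H) :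
    tensorPowerMul L n z ∈ I ^ n := by
  induction z using PiTensorProduct.induction_on with
  | smul_tprod r v =>
    rw [map_smul, tensorPowerMul_tprod]
    exact Submodule.smul_mem _ _ (I.list_prod_ofFn_mem_pow fun s => hL (v s))
  | add x y hx hy => rw [map_add]; exact add_mem hx hy

abbrev GradedPiece (I : Submodule k A) (n : ℕ) : Type _ :=
  ↥(I ^ n) ⧸ (I ^ (n + 1)).comap (I ^ n).subtype

noncomputable def toGradedPiece {I : Submodule k A} (hL : ∀ h, L h ∈ I) :
    ⨂[k]^n H →ₗ[k] GradedPiece I n :=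
  ((I ^ (n + 1)).comap (I ^ n).subtype).mkQ ∘ₗ
    (tensorPowerMul L n).codRestrict (I ^ n) (tensorPowerMul_mem_pow n hL)

lemma toGradedPiece_apply {I : Submodule k A} (hL : ∀ h, L h ∈ I) (z : ⨂[k]^n H) :
    toGradedPiece n hL z = Submodule.Quotient.mk ⟨_, tensorPowerMul_mem_pow n hL z⟩ :=
  rfl

lemma toGradedPiece_injective {I : Submodule k A} (hL : ∀ h, L h ∈ I)
    (Θ : A →ₗ[k] ⨂[k]^n H) (hΘ : ∀ x ∈ I ^ (n + 1), Θ x = 0)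
    (hΘL : Θ ∘ₗ tensorPowerMul L n = LinearMap.id) :
    Function.Injective (toGradedPiece n hL) := by
  intro z w hzw
  rw [toGradedPiece_apply, toGradedPiece_apply, Submodule.Quotient.eq] at hzw
  have hz := LinearMap.congr_fun hΘL z
  have hw := LinearMap.congr_fun hΘL w
  simp only [LinearMap.comp_apply, LinearMap.id_apply] at hz hw
  rw [← hz, ← hw, ← sub_eq_zero, ← map_sub]
  exact hΘ _ hzw

lemma toGradedPiece_surjective {I : Submodule k A} (hL : ∀ h, L h ∈ I) (S : Set A)
    (hI : I = Submodule.span k S) (hS : ∀ s ∈ S, ∃ h, s - L h ∈ I ^ 2) :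
    Function.Surjective (toGradedPiece n hL) := by
  have hpow : I ^ n ≤ LinearMap.range (tensorPowerMul L n) ⊔ I ^ (n + 1) := by
    conv_lhs => rw [hI, Submodule.span_pow]
    rw [Submodule.span_le]
    intro x hx
    obtain ⟨f, rfl⟩ := Set.mem_pow.1 hx
    choose h hh using fun s => hS _ (f s).2
    have hf : ∀ s, (f s : A) ∈ I := fun s => hI ▸ Submodule.subset_span (f s).2
    refine Submodule.mem_sup.2 ⟨_, ⟨PiTensorProduct.tprod k h, rfl⟩, _,
      I.list_prod_ofFn_sub_mem_pow hf (fun s => hL (h s)) hh, ?_⟩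
    rw [tensorPowerMul_tprod, add_sub_cancel]
  intro q
  obtain ⟨⟨x, hx⟩, rfl⟩ := Submodule.Quotient.mk_surjective _ q
  obtain ⟨_, ⟨z, rfl⟩, y, hy, hxy⟩ := Submodule.mem_sup.1 (hpow hx)
  refine ⟨z, (Submodule.Quotient.eq _).2 ?_⟩
  simpa [← hxy] using neg_mem hy

end GradedPiece

lemma mul_sub_one_eq {A : Type*} [Ring A] (a b : A) :
    a * b - 1 = (a - 1) + (b - 1) + (a - 1) * (b - 1) := by
  noncomm_ring

section Augmentation

variable (k G : Type*) [CommRing k] [Group G]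

noncomputable def augmentationIdeal : Submodule k (MonoidAlgebra k G) :=
  Submodule.span k (Set.range fun g => of k G g - 1)

variable {k G}

lemma of_sub_one_mem_augmentationIdeal (g : G) : of k G g - 1 ∈ augmentationIdeal k G :=
  Submodule.subset_span ⟨g, rfl⟩

lemma ker_eq_augmentationIdeal (ε : MonoidAlgebra k G →ₐ[k] k)
    (hε : ∀ g, ε (of k G g) = 1) : LinearMap.ker ε.toLinearMap = augmentationIdeal k G := by
  refine le_antisymm (fun x hx => ?_) (Submodule.span_le.2 ?_)
  · have hsub : ∀ y, y - ε y • 1 ∈ augmentationIdeal k G := fun y => by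
      induction y using MonoidAlgebra.induction_on with
      | of g =>
        rw [hε g, one_smul]
        exact of_sub_one_mem_augmentationIdeal g
      | add x y hx hy => simpa [add_smul, add_sub_add_comm] using add_mem hx hy
      | smul r x hx => simpa [smul_sub, smul_smul] using Submodule.smul_mem _ r hx
    simpa [show ε x = 0 from hx] using hsub x
  · rintro _ ⟨g, rfl⟩
    rw [SetLike.mem_coe, LinearMap.mem_ker, AlgHom.toLinearMap_apply, map_sub, hε, map_one,
      sub_self]

lemma of_mul_sub_one (g h : G) :
    of k G (g * h) - 1 = (of k G g - 1) + (of k G h - 1) + (of k G g - 1) * (of k G h - 1) := by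
  rw [map_mul, mul_sub_one_eq]

end Augmentation

section FreeGroup

variable {k : Type*} [CommRing k] {α : Type*} [Fintype α]

variable (k) in
noncomputable def toAugmentation : (α → k) →ₗ[k] MonoidAlgebra k (FreeGroup α) :=
  Fintype.linearCombination k fun i => of k _ (FreeGroup.of i) - 1

lemma toAugmentation_mem (h : α → k) :
    toAugmentation k h ∈ augmentationIdeal k (FreeGroup α) := by
  rw [toAugmentation, Fintype.linearCombination_apply]
  exact Submodule.sum_mem _ fun i _ => Submodule.smul_mem _ _ (of_sub_one_mem_augmentationIdeal _)

variable [DecidableEq α]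

lemma toAugmentation_single (i : α) :
    toAugmentation k (Pi.single i 1) = of k (FreeGroup α) (FreeGroup.of i) - 1 := by
  simp [toAugmentation, Fintype.linearCombination_apply_single]

/-- The witness `h` is the image of `g` in the abelianization. -/
lemma exists_of_sub_one_sub_toAugmentation_mem_sq (g : FreeGroup α) :
    ∃ h, of k _ g - 1 - toAugmentation k h ∈ augmentationIdeal k (FreeGroup α) ^ 2 := by
  have hsq : ∀ a b : FreeGroup α,
      (of k _ a - 1) * (of k _ b - 1) ∈ augmentationIdeal k (FreeGroup α) ^ 2 := fun a b => by
    rw [pow_two]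
    exact Submodule.mul_mem_mul (of_sub_one_mem_augmentationIdeal a)
      (of_sub_one_mem_augmentationIdeal b)
  induction g using FreeGroup.induction_on with
  | C1 => exact ⟨0, by rw [map_one, sub_self, map_zero, sub_self]; exact zero_mem _⟩
  | of i => exact ⟨Pi.single i 1, by rw [toAugmentation_single, sub_self]; exact zero_mem _⟩
  | inv_of i ih =>
    obtain ⟨h, hh⟩ := ih
    have hinv := of_mul_sub_one (k := k) (FreeGroup.of i)⁻¹ (FreeGroup.of i)
    rw [inv_mul_cancel, map_one, sub_self] at hinv
    refine ⟨-h, ?_⟩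
    convert sub_mem (neg_mem hh) (hsq (FreeGroup.of i)⁻¹ (FreeGroup.of i)) using 1
    rw [← sub_eq_zero, hinv, map_neg]
    abel
  | mul g g' ih ih' =>
    obtain ⟨h, hh⟩ := ih
    obtain ⟨h', hh'⟩ := ih'
    refine ⟨h + h', ?_⟩
    convert add_mem (add_mem hh hh') (hsq g g') using 1
    rw [of_mul_sub_one, map_add]
    abel

end FreeGroup

section Raising

variable {k V : Type*} [CommRing k] [AddCommGroup V] [Module k V] (F : ℕ → Submodule k V)

def raising (m : ℕ) : Submodule k (Module.End k V) where
  carrier := {f | ∀ j, ∀ v ∈ F j, f v ∈ F (j + m)}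
  add_mem' hf hg j v hv := add_mem (hf j v hv) (hg j v hv)
  zero_mem' _ _ _ := zero_mem _
  smul_mem' c _ hf j v hv := Submodule.smul_mem _ c (hf j v hv)

variable {F}

lemma mem_raising {m : ℕ} {f : Module.End k V} :
    f ∈ raising F m ↔ ∀ j, ∀ v ∈ F j, f v ∈ F (j + m) :=
  Iff.rfl

lemma one_mem_raising_zero : 1 ∈ raising F 0 :=
  mem_raising.2 fun _ _ hv => hv

lemma raising_antitone (hF : Antitone F) {a b : ℕ} (h : a ≤ b) : raising F b ≤ raising F a :=
  fun _ hf => mem_raising.2 fun j _ hv => hF (by omega) (hf j _ hv)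

lemma mul_mem_raising {a b : ℕ} {f g : Module.End k V} (hf : f ∈ raising F a)
    (hg : g ∈ raising F b) : f * g ∈ raising F (a + b) := mem_raising.2 fun j _ hv => by
  have := hf _ _ (hg j _ hv)
  rwa [show j + b + a = j + (a + b) by omega] at this

lemma pow_mem_raising {f : Module.End k V} (hf : f ∈ raising F 1) (m : ℕ) :
    f ^ m ∈ raising F m := by
  induction m with
  | zero => exact one_mem_raising_zero
  | succ m ih => rw [pow_succ]; exact mul_mem_raising ih hf

variable {N : ℕ} (h0 : F 0 = ⊤) (hN : F (N + 1) = ⊥)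
include h0 hN

lemma eq_zero_of_mem_raising {f : Module.End k V} (hf : f ∈ raising F (N + 1)) : f = 0 :=
  LinearMap.ext fun v => by
    have := hf 0 v (h0 ▸ Submodule.mem_top)
    rwa [zero_add, hN, Submodule.mem_bot] at this

lemma pow_eq_zero_of_mem_raising {f : Module.End k V} (hf : f ∈ raising F 1) : f ^ (N + 1) = 0 :=
  eq_zero_of_mem_raising h0 hN (pow_mem_raising hf _)

lemma inv_sub_one_mem_raising (hF : Antitone F) {u : (Module.End k V)ˣ}
    (hu : (u : Module.End k V) - 1 ∈ raising F 1) :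
    (↑u⁻¹ : Module.End k V) - 1 ∈ raising F 1 := by
  set y : Module.End k V := 1 - u
  have hy : y ∈ raising F 1 := by simpa [y] using neg_mem hu
  have hinv : (↑u⁻¹ : Module.End k V) = ∑ i ∈ Finset.range (N + 1), y ^ i :=
    Units.inv_eq_of_mul_eq_one_right <| by
      rw [show (u : Module.End k V) = 1 - y from (sub_sub_cancel _ _).symm, mul_neg_geom_sum,
        pow_eq_zero_of_mem_raising h0 hN hy, sub_zero]
  rw [hinv, Finset.sum_range_succ', pow_zero, add_sub_cancel_right]
  exact Submodule.sum_mem _ fun i _ => raising_antitone hF (by omega) (pow_mem_raising hy (i + 1))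

def unipotent (hF : Antitone F) : Subgroup (Module.End k V)ˣ where
  carrier := {u | (u : Module.End k V) - 1 ∈ raising F 1}
  mul_mem' {u v} hu hv := by
    rw [Set.mem_ofPred_eq, Units.val_mul, mul_sub_one_eq]
    exact add_mem (add_mem hu hv) (raising_antitone hF (by omega) (mul_mem_raising hu hv))
  one_mem' := by simp [zero_mem]
  inv_mem' := inv_sub_one_mem_raising h0 hN hF

lemma mem_unipotent (hF : Antitone F) {u : (Module.End k V)ˣ} :
    u ∈ unipotent h0 hN hF ↔ (u : Module.End k V) - 1 ∈ raising F 1 :=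
  Iff.rfl

end Raising

namespace Magnus

variable (k : Type*) [CommRing k] (α : Type*) (n : ℕ)

abbrev Words : Type _ := {w : List α // w.length ≤ n}

/-- Left multiplication by the letter `i` in the tensor algebra truncated above degree `n`. -/
noncomputable def prepend (i : α) : Module.End k (Words α n →₀ k) :=
  Finsupp.linearCombination k fun w =>
    if h : w.1.length < n then Finsupp.single ⟨i :: w.1, h⟩ 1 else 0

noncomputable def filtration (j : ℕ) : Submodule k (Words α n →₀ k) :=
  Finsupp.supported k k {w | j ≤ w.1.length}

variable {k α n}

lemma prepend_single (i : α) (w : Words α n) (c : k) :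
    prepend k α n i (Finsupp.single w c) =
      if h : w.1.length < n then Finsupp.single ⟨i :: w.1, h⟩ c else 0 := by
  rw [prepend, Finsupp.linearCombination_single]
  split_ifs <;> simp [Finsupp.smul_single]

lemma filtration_antitone : Antitone (filtration k α n) :=
  fun _ _ h => Finsupp.supported_mono fun _ hw => le_trans h hw

lemma filtration_zero : filtration k α n 0 = ⊤ := by
  simp [filtration]

lemma filtration_succ : filtration k α n (n + 1) = ⊥ := by
  rw [filtration, show {w : Words α n | n + 1 ≤ w.1.length} = ∅ from
    Set.eq_empty_of_forall_notMem fun w (hw : n + 1 ≤ w.1.length) => by have := w.2; omega]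
  exact Finsupp.supported_empty

lemma prepend_mem_raising (i : α) : prepend k α n i ∈ raising (filtration k α n) 1 := by
  intro j
  suffices filtration k α n j ≤ (filtration k α n (j + 1)).comap (prepend k α n i) from
    fun v hv => this hv
  rw [filtration, Finsupp.supported_eq_span_single, Submodule.span_le]
  rintro _ ⟨w, hw, rfl⟩
  rw [SetLike.mem_coe, Submodule.mem_comap, prepend_single]
  split_ifs with h
  · exact Finsupp.single_mem_supported k _ (Nat.succ_le_succ hw)
  · exact zero_mem _

variable (k α n) in
noncomputable def generator (i : α) :
    unipotent (F := filtration k α n) filtration_zero filtration_succ filtration_antitone :=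
  ⟨(IsNilpotent.isUnit_one_add (r := prepend k α n i) ⟨_,
      pow_eq_zero_of_mem_raising filtration_zero filtration_succ (prepend_mem_raising i)⟩).unit,
    (mem_unipotent _ _ _).2 <| by
      rw [IsUnit.unit_spec, add_sub_cancel_left (1 : Module.End k (Words α n →₀ k))]
      exact prepend_mem_raising i⟩

variable (k α n) in
/-- The Magnus representation `x_i ↦ 1 + X_i` of the free group, truncated above degree `n`. -/
noncomputable def rep :
    MonoidAlgebra k (FreeGroup α) →ₐ[k] Module.End k (Words α n →₀ k) :=
  MonoidAlgebra.lift k _ _ <|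
    (Units.coeHom _).comp <| (unipotent _ _ _).subtype.comp <| FreeGroup.lift (generator k α n)

lemma rep_of (g : FreeGroup α) :
    rep k α n (of k _ g) =
      ((FreeGroup.lift (generator k α n) g : (Module.End k (Words α n →₀ k))ˣ) :
        Module.End k (Words α n →₀ k)) :=
  MonoidAlgebra.lift_of _ _

lemma rep_of_generator (i : α) : rep k α n (of k _ (FreeGroup.of i) - 1) = prepend k α n i := by
  rw [map_sub, map_one, rep_of, FreeGroup.lift_apply_of]
  exact add_sub_cancel_left (1 : Module.End k (Words α n →₀ k)) _

lemma rep_of_sub_one_mem_raising (g : FreeGroup α) :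
    rep k α n (of k _ g - 1) ∈ raising (filtration k α n) 1 := by
  rw [map_sub, map_one, rep_of]
  exact (FreeGroup.lift (generator k α n) g).2

lemma augmentationIdeal_le_comap_rep :
    augmentationIdeal k (FreeGroup α) ≤
      (raising (filtration k α n) 1).comap (rep k α n).toLinearMap :=
  Submodule.span_le.2 <| by rintro _ ⟨g, rfl⟩; exact rep_of_sub_one_mem_raising g

lemma pow_augmentationIdeal_le_comap_rep (m : ℕ) :
    augmentationIdeal k (FreeGroup α) ^ m ≤
      (raising (filtration k α n) m).comap (rep k α n).toLinearMap := by
  induction m with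
  | zero =>
    intro x hx
    obtain ⟨c, rfl⟩ := Submodule.mem_one.1 hx
    rw [Submodule.mem_comap, AlgHom.toLinearMap_apply, AlgHom.commutes,
      Algebra.algebraMap_eq_smul_one]
    exact Submodule.smul_mem _ c one_mem_raising_zero
  | succ m ih =>
    rw [pow_succ, Submodule.mul_le]
    intro a ha b hb
    rw [Submodule.mem_comap, AlgHom.toLinearMap_apply, map_mul]
    exact mul_mem_raising (ih ha) (augmentationIdeal_le_comap_rep hb)

lemma rep_eq_zero_of_mem_pow {x : MonoidAlgebra k (FreeGroup α)}
    (hx : x ∈ augmentationIdeal k (FreeGroup α) ^ (n + 1)) : rep k α n x = 0 :=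
  eq_zero_of_mem_raising filtration_zero filtration_succ (pow_augmentationIdeal_le_comap_rep _ hx)

lemma list_prod_prepend_single (w : List α) (v : Words α n) (h : (w ++ v.1).length ≤ n)
    (c : k) :
    (w.map (prepend k α n)).prod (Finsupp.single v c) = Finsupp.single ⟨w ++ v.1, h⟩ c := by
  induction w with
  | nil => rfl
  | cons a w ih =>
    have hw : (w ++ v.1).length < n := by simp only [List.cons_append, List.length_cons] at h; omega
    rw [List.map_cons, List.prod_cons, Module.End.mul_apply, ih hw.le, prepend_single, dif_pos hw]
    rfl

variable (n) in
def word (i : Fin n → α) : Words α n := ⟨List.ofFn i, (List.length_ofFn).le⟩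

lemma rep_prod_single_nil (i : Fin n → α) :
    rep k α n (List.ofFn fun s => of k _ (FreeGroup.of (i s)) - 1).prod
      (Finsupp.single ⟨[], Nat.zero_le n⟩ 1) = Finsupp.single (word n i) 1 := by
  have h := list_prod_prepend_single (k := k) (List.ofFn i) ⟨[], Nat.zero_le n⟩ (by simp) 1
  rw [map_list_prod, List.map_ofFn]
  simp only [Function.comp_def, rep_of_generator]
  rw [List.map_ofFn, Function.comp_def] at h
  refine h.trans ?_
  congr 1
  exact Subtype.ext (List.append_nil _)

variable [Fintype α] [DecidableEq α]

variable (k α n) in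
noncomputable def topCoeff : (Words α n →₀ k) →ₗ[k] ⨂[k]^n (α → k) :=
  ∑ i : Fin n → α,
    (Finsupp.lapply (word n i)).smulRight (PiTensorProduct.tprod k fun s => Pi.single (i s) 1)

lemma topCoeff_single_word (i : Fin n → α) :
    topCoeff k α n (Finsupp.single (word n i) 1) =
      PiTensorProduct.tprod k fun s => Pi.single (i s) 1 := by
  have word_injective : Function.Injective (word (α := α) n) :=
    fun i j h => List.ofFn_injective (congrArg Subtype.val h)
  simp only [topCoeff, LinearMap.sum_apply, LinearMap.smulRight_apply, Finsupp.lapply_apply]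
  rw [Finset.sum_eq_single i (fun j _ hj => by
      rw [Finsupp.single_apply, if_neg (word_injective.ne hj.symm), zero_smul])
    (by simp), Finsupp.single_eq_same, one_smul]

variable (k α n) in
/-- The degree-`n` part of the Magnus expansion. -/
noncomputable def magnusCoeff : MonoidAlgebra k (FreeGroup α) →ₗ[k] ⨂[k]^n (α → k) :=
  topCoeff k α n ∘ₗ LinearMap.applyₗ (Finsupp.single ⟨[], Nat.zero_le n⟩ 1) ∘ₗ
    (rep k α n).toLinearMap

lemma magnusCoeff_eq_zero_of_mem_pow {x : MonoidAlgebra k (FreeGroup α)}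
    (hx : x ∈ augmentationIdeal k (FreeGroup α) ^ (n + 1)) : magnusCoeff k α n x = 0 := by
  simp [magnusCoeff, rep_eq_zero_of_mem_pow hx]

lemma magnusCoeff_comp_tensorPowerMul :
    magnusCoeff k α n ∘ₗ tensorPowerMul (toAugmentation k) n = LinearMap.id := by
  refine PiTensorProduct.ext (Module.Basis.ext_multilinear (fun _ => Pi.basisFun k α) fun i => ?_)
  simp only [LinearMap.compMultilinearMap_apply, LinearMap.comp_apply, Pi.basisFun_apply,
    tensorPowerMul_tprod, toAugmentation_single, LinearMap.id_apply, magnusCoeff,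
    AlgHom.toLinearMap_apply, LinearMap.applyₗ_apply_apply, rep_prod_single_nil,
    topCoeff_single_word]

lemma toGradedPiece_bijective :
    Function.Bijective (toGradedPiece n (toAugmentation_mem (k := k) (α := α))) :=
  ⟨toGradedPiece_injective n _ (magnusCoeff k α n) (fun _ => magnusCoeff_eq_zero_of_mem_pow)
      magnusCoeff_comp_tensorPowerMul,
    toGradedPiece_surjective n _ _ rfl fun _ ⟨g, hg⟩ => hg ▸
      exists_of_sub_one_sub_toAugmentation_mem_sq g⟩

variable (k α n) in
noncomputable def gradedPieceEquiv :
    GradedPiece (augmentationIdeal k (FreeGroup α)) n ≃ₗ[k] ⨂[k]^n (α → k) :=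
  (LinearEquiv.ofBijective _ toGradedPiece_bijective).symm

lemma gradedPieceEquiv_symm_tprod (i : Fin n → α) :
    (gradedPieceEquiv k α n).symm (PiTensorProduct.tprod k fun s => Pi.single (i s) 1) =
      Submodule.Quotient.mk ⟨(List.ofFn fun s => of k _ (FreeGroup.of (i s)) - 1).prod,
        Submodule.list_prod_ofFn_mem_pow _ fun _ => of_sub_one_mem_augmentationIdeal _⟩ := by
  rw [gradedPieceEquiv, LinearEquiv.symm_symm, LinearEquiv.ofBijective_apply, toGradedPiece_apply]
  simp only [tensorPowerMul_tprod, toAugmentation_single]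

end Magnus

/-- Magnus-type isomorphism `Iⁿ/I^{n+1} ≃ H^{⊗n}` for the
augmentation ideal `I` of the rational group algebra of a free group on `M`
generators, sending the class of `(x_{i₁}-1)⋯(x_{iₙ}-1)` to
`e_{i₁} ⊗ ⋯ ⊗ e_{iₙ}`. -/
theorem stmt_15 (M : ℕ) (n : ℕ)
    (ε : MonoidAlgebra ℚ (FreeGroup (Fin M)) →ₐ[ℚ] ℚ)
    (hε : ∀ g : FreeGroup (Fin M), ε (of ℚ (FreeGroup (Fin M)) g) = 1)
    (I : Submodule ℚ (MonoidAlgebra ℚ (FreeGroup (Fin M))))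
    (hI : I = LinearMap.ker ε.toLinearMap) :
    ∃ e : (↥(I ^ n) ⧸ Submodule.comap (I ^ n).subtype (I ^ (n + 1)))
        ≃ₗ[ℚ] (⨂[ℚ]^n (Fin M → ℚ)),
      ∀ (i : Fin n → Fin M)
        (h : (List.ofFn fun s : Fin n =>
            (of ℚ (FreeGroup (Fin M)) (FreeGroup.of (i s)) - 1)).prod ∈ I ^ n),
        e (Submodule.Quotient.mk ⟨_, h⟩)
          = PiTensorProduct.tprod ℚ (fun s => Pi.single (i s) (1 : ℚ)) := by
  obtain rfl : I = augmentationIdeal ℚ (FreeGroup (Fin M)) :=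
    hI.trans (ker_eq_augmentationIdeal ε hε)
  exact ⟨Magnus.gradedPieceEquiv ℚ (Fin M) n, fun i _ =>
    ((LinearEquiv.symm_apply_eq _).1 (Magnus.gradedPieceEquiv_symm_tprod i)).symm⟩
end

section
/- Let G be a group acting on a set S, let V be a rational vector space, and let f : S → V satisfy f((yx)·r) + f((y x⁻¹)·r) = 2 f(y·r) for all x, y ∈ G and r ∈ S. Extend f to a ℚ-bilinear map F : ℚ[G] × S → V by F(Σ c_g g, r) = Σ c_g f(g·r). Then for all x, y, z ∈ G and r ∈ S: (i) F((x−1)(y−1), r) = −F((y−1)(x−1), r), and (ii) F((x−1)(y−1)(z−1), r) = 0. -/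
/-!
Put `X = x - 1`, `Y = y - 1`, `Z = z - 1` in `ℚ[G]` and `E(p) = F(p, r)`. Adding the relation for
`(a, b)`, for `(b, a)` and subtracting it for `(1, a b⁻¹)` gives
`E(ab) + E(ba) = 2 E(a) + 2 E(b) - 2 E(1)`, which is exactly `E(XY) = -E(YX)`.
Since `XY = (xy - 1) - X - Y`, this antisymmetry also gives `E(XY · Z) = -E(Z · XY)`, and applying
it three times around the cycle `XYZ ↦ ZXY ↦ YZX ↦ XYZ` yields `E(XYZ) = -E(XYZ)`.
-/

open MonoidAlgebra

namespace MonoidAlgebra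

theorem of_sub_one_mul_of_sub_one {k G : Type*} [Ring k] [Monoid G] (a b : G) :
    (of k G a - 1) * (of k G b - 1) =
      (of k G (a * b) - 1) - (of k G a - 1) - (of k G b - 1) := by
  rw [map_mul]; noncomm_ring

variable {k G : Type*} [CommRing k] [Group G]

variable {V : Type*} [AddCommGroup V] [Module k V] {E : MonoidAlgebra k G →ₗ[k] V}

theorem apply_of_mul_add_apply_of_mul_swap
    (hE : ∀ a b : G, E (of k G (a * b)) + E (of k G (a * b⁻¹)) = (2 : k) • E (of k G a))
    (a b : G) :
    E (of k G (a * b)) + E (of k G (b * a)) =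
      (2 : k) • E (of k G a) + (2 : k) • E (of k G b) - (2 : k) • E 1 := by
  have hab := hE a b
  have hba := hE b a
  have h1 := hE 1 (a * b⁻¹)
  rw [one_mul, one_mul, mul_inv_rev, inv_inv, map_one] at h1
  linear_combination (norm := module) hab + hba - h1

theorem apply_of_sub_one_mul_of_sub_one_swap
    (hE : ∀ a b : G, E (of k G (a * b)) + E (of k G (a * b⁻¹)) = (2 : k) • E (of k G a))
    (a b : G) :
    E ((of k G a - 1) * (of k G b - 1)) = -E ((of k G b - 1) * (of k G a - 1)) := by
  have h := apply_of_mul_add_apply_of_mul_swap hE a b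
  rw [of_sub_one_mul_of_sub_one, of_sub_one_mul_of_sub_one]
  simp only [map_sub]
  linear_combination (norm := module) h

theorem apply_of_sub_one_mul_of_sub_one_mul_of_sub_one_rotate
    (hE : ∀ a b : G, E (of k G (a * b)) + E (of k G (a * b⁻¹)) = (2 : k) • E (of k G a))
    (a b c : G) :
    E ((of k G a - 1) * (of k G b - 1) * (of k G c - 1)) =
      -E ((of k G c - 1) * (of k G a - 1) * (of k G b - 1)) := by
  have hab := apply_of_sub_one_mul_of_sub_one_swap hE (a * b) c
  have ha := apply_of_sub_one_mul_of_sub_one_swap hE a c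
  have hb := apply_of_sub_one_mul_of_sub_one_swap hE b c
  rw [of_sub_one_mul_of_sub_one a b, mul_assoc, of_sub_one_mul_of_sub_one a b]
  set W := of k G (a * b) - 1
  set X := of k G a - 1
  set Y := of k G b - 1
  set Z := of k G c - 1
  simp only [sub_mul, mul_sub, map_sub]
  linear_combination (norm := module) hab - ha - hb

theorem two_smul_apply_of_sub_one_mul_of_sub_one_mul_of_sub_one
    (hE : ∀ a b : G, E (of k G (a * b)) + E (of k G (a * b⁻¹)) = (2 : k) • E (of k G a))
    (a b c : G) :
    (2 : k) • E ((of k G a - 1) * (of k G b - 1) * (of k G c - 1)) = 0 := by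
  have habc := apply_of_sub_one_mul_of_sub_one_mul_of_sub_one_rotate hE a b c
  have hcab := apply_of_sub_one_mul_of_sub_one_mul_of_sub_one_rotate hE c a b
  have hbca := apply_of_sub_one_mul_of_sub_one_mul_of_sub_one_rotate hE b c a
  linear_combination (norm := module) habc - hcab + hbca

end MonoidAlgebra

theorem stmt_16 {G : Type*} [Group G] {S : Type*} [MulAction G S]
    {V : Type*} [AddCommGroup V] [Module ℚ V]
    (f : S → V)
    (hf : ∀ (x y : G) (r : S), f ((y * x) • r) + f ((y * x⁻¹) • r) = (2 : ℚ) • f (y • r))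
    (F : MonoidAlgebra ℚ G →ₗ[ℚ] S → V)
    (hF : ∀ (g : G) (r : S), F (of ℚ G g) r = f (g • r)) :
    ∀ (x y z : G) (r : S),
      F ((of ℚ G x - 1) * (of ℚ G y - 1)) r = - F ((of ℚ G y - 1) * (of ℚ G x - 1)) r
      ∧ F ((of ℚ G x - 1) * (of ℚ G y - 1) * (of ℚ G z - 1)) r = 0 := by
  intro x y z r
  set E : MonoidAlgebra ℚ G →ₗ[ℚ] V := LinearMap.proj r ∘ₗ F
  have hE : ∀ a b : G, E (of ℚ G (a * b)) + E (of ℚ G (a * b⁻¹)) = (2 : ℚ) • E (of ℚ G a) := by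
    intro a b
    simpa only [E, LinearMap.comp_apply, LinearMap.proj_apply, hF] using hf b a r
  exact ⟨apply_of_sub_one_mul_of_sub_one_swap hE x y,
    (smul_eq_zero.mp (two_smul_apply_of_sub_one_mul_of_sub_one_mul_of_sub_one hE x y z)).resolve_left
      two_ne_zero⟩
end
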